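/- arXiv:2305.08883 — 3 statements merged into one kernel-verified Lean document; each statement's English description precedes it below -/
import Mathlib

section
/- Let z ∈ ℝᶜ with pairwise distinct entries and define s_i = Σ_{j≠i} (1 + sgn(z_i − z_j))/2. Then the one-hot encoding obtained by applying the indicator of {t : t ≥ c − 1} to s (i.e., m_i = 1 if s_i ≥ c − 1 and 0 otherwise) equals the argmax one-hot vector: m_i = 1 iff z_i = max_j z_j. -/
open Finset

noncomputable def sgn (t : ℝ) : ℝ := if 0 < t then 1 else -1

/-!
For pairwise distinct entries, `(1 + sgn (z i - z j)) / 2` is the indicator of `z j < z i`, so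
`s i` counts the entries strictly below `z i`. Adding `i` itself gives the number of entries
`≤ z i`, which reaches `c` exactly when `z i` is the maximum.
-/

theorem one_add_sgn_sub_div_two {a b : ℝ} (h : a ≠ b) :
    (1 + sgn (a - b)) / 2 = if b < a then 1 else 0 := by
  unfold sgn
  rcases h.lt_or_gt with hab | hab
  · rw [if_neg (by linarith), if_neg hab.not_gt]; ring
  · rw [if_pos (by linarith), if_pos hab]; ring

section Ranking

variable {ι α : Type*} [Fintype ι] [DecidableEq ι] [LinearOrder α] {z : ι → α}

theorem card_filter_le_eq_card_filter_lt_add_one (hz : Function.Injective z) (i : ι) :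
    #{j | z j ≤ z i} = #{j | z j < z i} + 1 := by
  have hsplit : univ.filter (fun j => z j ≤ z i) = insert i (univ.filter fun j => z j < z i) := by
    ext j
    simp only [mem_filter, mem_univ, true_and, mem_insert, le_iff_lt_or_eq, hz.eq_iff]
    tauto
  rw [hsplit, card_insert_of_notMem (by simp)]

theorem card_le_card_filter_lt_add_one_iff (hz : Function.Injective z) (i : ι) :
    Fintype.card ι ≤ #{j | z j < z i} + 1 ↔ ∀ j, z j ≤ z i := by
  rw [← card_filter_le_eq_card_filter_lt_add_one hz, ← card_univ,
    (card_filter_le univ _).ge_iff_eq, card_filter_eq_iff]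
  simp

end Ranking

theorem sum_one_add_sgn_sub_div_two_eq_card_lt {ι : Type*} [Fintype ι] [DecidableEq ι]
    {z : ι → ℝ} (hz : Function.Injective z) (i : ι) :
    ∑ j ∈ univ.filter (· ≠ i), (1 + sgn (z i - z j)) / 2 = #{j | z j < z i} := by
  have hlt :
      univ.filter (fun j => z j < z i) = (univ.filter (· ≠ i)).filter fun j => z j < z i := by
    ext j
    simp only [mem_filter, mem_univ, true_and, iff_and_self]
    exact fun h hji => h.ne (congrArg z hji)
  rw [hlt, card_filter, Nat.cast_sum]
  refine sum_congr rfl fun j hj => ?_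
  rw [one_add_sgn_sub_div_two (hz.ne (mem_filter.mp hj).2.symm)]
  split_ifs <;> simp

theorem onehot_threshold_is_argmax_general
    {c : ℕ} (z : Fin c → ℝ) (hinj : Function.Injective z)
    (s m : Fin c → ℝ)
    (hs : ∀ i, s i = ∑ j ∈ univ.filter (· ≠ i), (1 + sgn (z i - z j)) / 2)
    (hm : ∀ i, m i = if (c : ℝ) - 1 ≤ s i then 1 else 0) :
    ∀ i, m i = 1 ↔ ∀ j, z j ≤ z i := by
  intro i
  have hthreshold : (c : ℝ) - 1 ≤ s i ↔ ∀ j, z j ≤ z i := by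
    rw [hs i, sum_one_add_sgn_sub_div_two_eq_card_lt hinj, sub_le_iff_le_add,
      ← card_le_card_filter_lt_add_one_iff hinj, Fintype.card_fin]
    norm_cast
  rw [hm i, ← hthreshold]
  split_ifs with h <;> simp [h]

theorem onehot_threshold_is_argmax
    {c : ℕ} (hc : 0 < c) (z : Fin c → ℝ) (hinj : Function.Injective z)
    (s m : Fin c → ℝ)
    (hs : ∀ i, s i = ∑ j ∈ univ.filter (· ≠ i), (1 + sgn (z i - z j)) / 2)
    (hm : ∀ i, m i = if (c : ℝ) - 1 ≤ s i then 1 else 0) :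
    ∀ i, m i = 1 ↔ ∀ j, z j ≤ z i :=
  onehot_threshold_is_argmax_general z hinj s m hs hm
end

section
/- Suppose g : ℝ → ℝ satisfies |g(t) − sgn(t)| ≤ ψ for all t ∈ [−1,−φ] ∪ [φ,1], with 0 < ψ < 1/(c−1) for c ≥ 2. Let z ∈ ℝᶜ with all pairwise normalized differences d_{ij} = (z_i − z_j)/(Z_max − Z_min) lying in [−1,−φ] ∪ [φ,1]. Define approximate scores ŝ_i = Σ_{j≠i} (1 + g(d_{ij}))/2 and exact scores s_i = Σ_{j≠i} (1 + sgn(d_{ij}))/2. Then |ŝ_i − s_i| ≤ (c−1)ψ/2 < 1/2 for every i; in particular, the index attaining ŝ_i > c − 1 − 1/2 is unique and equals the argmax of z. -/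
open Finset

/-!
The exact score `s i` counts the entries of `z` lying strictly below `z i`, so it is an
integer, equal to `c - 1` exactly when `z i` is the (unique) maximum and at most `c - 2`
otherwise. Each of the `c - 1` summands of `ŝ i` is within `ψ / 2` of the corresponding summand
of `s i`, and `(c - 1) ψ / 2 < 1 / 2`, so the threshold `c - 3 / 2` separates the two cases.
-/

lemma sgn_div_of_pos {D : ℝ} (hD : 0 < D) (x : ℝ) : sgn (x / D) = sgn x := by
  simp only [sgn, div_pos_iff_of_pos_right hD]

lemma one_add_sgn_div_two (t : ℝ) : (1 + sgn t) / 2 = if 0 < t then 1 else 0 := by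
  unfold sgn
  split_ifs <;> norm_num

lemma zero_notMem_Icc_neg_union_Icc {φ : ℝ} (hφ : 0 < φ) :
    (0 : ℝ) ∉ Set.Icc (-1) (-φ) ∪ Set.Icc φ 1 := by
  rintro (⟨-, h⟩ | ⟨h, -⟩) <;> linarith

lemma abs_sum_half_one_add_sub_le {ι : Type*} (S : Finset ι) (a b : ι → ℝ) {ε : ℝ}
    (h : ∀ j ∈ S, |a j - b j| ≤ ε) :
    |∑ j ∈ S, (1 + a j) / 2 - ∑ j ∈ S, (1 + b j) / 2| ≤ #S * ε / 2 := by
  rw [← sum_sub_distrib]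
  calc |∑ j ∈ S, ((1 + a j) / 2 - (1 + b j) / 2)|
      ≤ ∑ j ∈ S, |(1 + a j) / 2 - (1 + b j) / 2| := abs_sum_le_sum_abs _ _
    _ ≤ ∑ _j ∈ S, ε / 2 := by
        refine sum_le_sum fun j hj => ?_
        rw [show (1 + a j) / 2 - (1 + b j) / 2 = (a j - b j) / 2 by ring, abs_div, abs_two]
        linarith [h j hj]
    _ = #S * ε / 2 := by rw [sum_const, nsmul_eq_mul]; ring

section Rank

variable {ι : Type*} [Fintype ι] [DecidableEq ι] (z : ι → ℝ) (i : ι)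

lemma sum_ne_one_add_sgn_div_two {D : ℝ} (hD : 0 < D) :
    ∑ j ∈ univ.filter (· ≠ i), (1 + sgn ((z i - z j) / D)) / 2 = #{j | z j < z i} := by
  simp only [sgn_div_of_pos hD, one_add_sgn_div_two, sub_pos]
  rw [sum_boole, filter_filter]
  congr 2
  ext j
  simp only [mem_filter, mem_univ, true_and, and_iff_right_iff_imp]
  exact fun h hji => (hji ▸ h).false

lemma card_filter_lt_add_one_of_forall_le (hz : Function.Injective z)
    (hi : ∀ j, z j ≤ z i) : #{j | z j < z i} + 1 = Fintype.card ι := by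
  have : ({j | z j < z i} : Finset ι) = univ.erase i := by
    ext j
    simp only [mem_filter, mem_univ, true_and, mem_erase, and_true]
    exact ⟨fun h hji => (hji ▸ h).false, fun hji => (hi j).lt_of_ne (hz.ne hji)⟩
  rw [this, card_erase_add_one (mem_univ i), card_univ]

lemma card_filter_lt_add_two_le {j : ι} (hij : z i < z j) :
    #{k | z k < z i} + 2 ≤ Fintype.card ι := by
  have hsub : ({k | z k < z i} : Finset ι) ⊆ univ \ {i, j} := by
    intro k hk
    simp only [mem_filter, mem_univ, true_and] at hk
    simp only [mem_sdiff, mem_univ, mem_insert, mem_singleton, true_and]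
    rintro (rfl | rfl) <;> linarith
  have hij' : i ≠ j := fun h => (h ▸ hij).false
  calc #{k | z k < z i} + 2 ≤ #(univ \ {i, j}) + #{i, j} := by
        rw [card_pair hij']; exact Nat.add_le_add_right (card_le_card hsub) 2
    _ = Fintype.card ι := card_sdiff_add_card_eq_card (subset_univ _)

lemma lt_iff_forall_le_of_abs_sub_card_filter_lt (hz : Function.Injective z) {x : ℝ}
    (hx : |x - #{j | z j < z i}| < 1 / 2) :
    (Fintype.card ι : ℝ) - 1 - 1 / 2 < x ↔ ∀ j, z j ≤ z i := by
  have hx' := abs_lt.mp hx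
  constructor
  · intro hlt
    by_contra! ⟨j, hij⟩
    have : (#{k | z k < z i} : ℝ) + 2 ≤ Fintype.card ι := by
      exact_mod_cast card_filter_lt_add_two_le z i hij
    linarith
  · intro hi
    have : (#{j | z j < z i} : ℝ) + 1 = Fintype.card ι := by
      exact_mod_cast card_filter_lt_add_one_of_forall_le z i hz hi
    linarith

end Rank

theorem approx_scores_close_and_argmax_general
    {c : ℕ} (hc : 2 ≤ c) (Zmin Zmax : ℝ) (hZ : Zmin < Zmax)
    (φ ψ : ℝ) (hφ0 : 0 < φ)
    (hψ : ψ < 1 / ((c : ℝ) - 1))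
    (g : ℝ → ℝ)
    (hg : ∀ t, t ∈ Set.Icc (-1 : ℝ) (-φ) ∪ Set.Icc φ 1 → |g t - sgn t| ≤ ψ)
    (z : Fin c → ℝ)
    (hz : ∀ i j, i ≠ j →
      (z i - z j) / (Zmax - Zmin) ∈ Set.Icc (-1 : ℝ) (-φ) ∪ Set.Icc φ 1)
    (shat s : Fin c → ℝ)
    (hshat : ∀ i, shat i =
      ∑ j ∈ univ.filter (· ≠ i), (1 + g ((z i - z j) / (Zmax - Zmin))) / 2)
    (hs : ∀ i, s i =
      ∑ j ∈ univ.filter (· ≠ i), (1 + sgn ((z i - z j) / (Zmax - Zmin))) / 2) :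
    (∀ i, |shat i - s i| ≤ ((c : ℝ) - 1) * ψ / 2) ∧
    ((c : ℝ) - 1) * ψ / 2 < 1 / 2 ∧
    (∀ i, (c : ℝ) - 1 - 1 / 2 < shat i ↔ ∀ j, z j ≤ z i) := by
  have hD : 0 < Zmax - Zmin := sub_pos.2 hZ
  have hc1 : (0 : ℝ) < c - 1 := by
    have : (2 : ℝ) ≤ c := by exact_mod_cast hc
    linarith
  have hcard (i : Fin c) : (#(univ.filter (· ≠ i)) : ℝ) = c - 1 := by
    rw [filter_ne', card_erase_of_mem (mem_univ i), card_univ, Fintype.card_fin,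
      Nat.cast_sub (by omega), Nat.cast_one]
  have hclose (i : Fin c) : |shat i - s i| ≤ ((c : ℝ) - 1) * ψ / 2 := by
    rw [hshat, hs, ← hcard i]
    exact abs_sum_half_one_add_sub_le _ _ _ fun j hj =>
      hg _ (hz i j (mem_filter.mp hj).2.symm)
  have hsmall : ((c : ℝ) - 1) * ψ / 2 < 1 / 2 := by
    have := (lt_div_iff₀ hc1).mp hψ
    linarith
  have hinj : Function.Injective z := fun i j hij => by
    by_contra hne
    exact zero_notMem_Icc_neg_union_Icc hφ0 (by simpa [hij] using hz i j hne)
  refine ⟨hclose, hsmall, fun i => ?_⟩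
  have hrank : |shat i - #{j | z j < z i}| < 1 / 2 := by
    rw [← sum_ne_one_add_sgn_div_two z i hD, ← hs]
    exact (hclose i).trans_lt hsmall
  simpa using lt_iff_forall_le_of_abs_sub_card_filter_lt z i hinj hrank

theorem approx_scores_close_and_argmax
    {c : ℕ} (hc : 2 ≤ c) (Zmin Zmax : ℝ) (hZ : Zmin < Zmax)
    (φ ψ : ℝ) (hφ0 : 0 < φ) (hφ1 : φ ≤ 1) (hψ0 : 0 < ψ)
    (hψ : ψ < 1 / ((c : ℝ) - 1))
    (g : ℝ → ℝ)
    (hg : ∀ t, t ∈ Set.Icc (-1 : ℝ) (-φ) ∪ Set.Icc φ 1 → |g t - sgn t| ≤ ψ)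
    (z : Fin c → ℝ)
    (hz : ∀ i j, i ≠ j →
      (z i - z j) / (Zmax - Zmin) ∈ Set.Icc (-1 : ℝ) (-φ) ∪ Set.Icc φ 1)
    (shat s : Fin c → ℝ)
    (hshat : ∀ i, shat i =
      ∑ j ∈ univ.filter (· ≠ i), (1 + g ((z i - z j) / (Zmax - Zmin))) / 2)
    (hs : ∀ i, s i =
      ∑ j ∈ univ.filter (· ≠ i), (1 + sgn ((z i - z j) / (Zmax - Zmin))) / 2) :
    (∀ i, |shat i - s i| ≤ ((c : ℝ) - 1) * ψ / 2) ∧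
    ((c : ℝ) - 1) * ψ / 2 < 1 / 2 ∧
    (∀ i, (c : ℝ) - 1 - 1 / 2 < shat i ↔ ∀ j, z j ≤ z i) :=
  approx_scores_close_and_argmax_general hc Zmin Zmax hZ φ ψ hφ0 hψ g hg z hz shat s hshat hs
end

section
/- Let X ~ Binomial(n, p⋆) and let β be the upper endpoint of the one-sided Clopper–Pearson interval at level 1−p, i.e., β = sup{q ∈ [0,1] : P(Binomial(n,q) ≤ k) ≥ p} where k is the observed count. Then P(p⋆ > β) ≤ p, i.e., the Clopper–Pearson upper bound covers the true parameter with probability at least 1 − p. -/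
/-!
If `p⋆` exceeds the upper bound `β(k)`, then `P(Binomial(n, p⋆) ≤ k) < p`, for otherwise `p⋆` would
belong to the set whose supremum is `β(k)`. Hence, if `K` is the largest count with `β(K) < p⋆`,
the event `β(X) < p⋆` is contained in `X ≤ K`, whose probability is below `p`.
-/

open Finset

/-- CDF of a Binomial(n, q) distribution evaluated at k. -/
noncomputable def binomCDF (n : ℕ) (q : ℝ) (k : ℕ) : ℝ :=
  ∑ i ∈ Finset.range (k + 1), (n.choose i : ℝ) * q ^ i * (1 - q) ^ (n - i)

/-- Upper endpoint of the one-sided Clopper–Pearson interval at level 1 − p,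
given observed count k out of n. -/
noncomputable def clopperPearsonUpper (n : ℕ) (k : ℕ) (p : ℝ) : ℝ :=
  sSup {q : ℝ | q ∈ Set.Icc (0 : ℝ) 1 ∧ p ≤ binomCDF n q k}

lemma binomCDF_lt_of_clopperPearsonUpper_lt {n k : ℕ} {p q : ℝ} (hq : q ∈ Set.Icc (0 : ℝ) 1)
    (h : clopperPearsonUpper n k p < q) : binomCDF n q k < p := by
  by_contra! hpq
  exact h.not_ge (le_csSup ⟨1, fun _ hx => hx.1.2⟩ ⟨hq, hpq⟩)

lemma sum_le_binomCDF_of_forall_le {n K : ℕ} {q : ℝ} (hq : q ∈ Set.Icc (0 : ℝ) 1)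
    {S : Finset ℕ} (hS : ∀ k ∈ S, k ≤ K) :
    ∑ k ∈ S, (n.choose k : ℝ) * q ^ k * (1 - q) ^ (n - k) ≤ binomCDF n q K := by
  refine sum_le_sum_of_subset_of_nonneg (fun k hk => mem_range_succ_iff.mpr (hS k hk)) ?_
  intro k _ _
  have hq₀ : 0 ≤ q := hq.1
  have hq₁ : 0 ≤ 1 - q := sub_nonneg.mpr hq.2
  positivity

theorem clopper_pearson_coverage_general
    (n : ℕ) (pstar : ℝ) (hpstar : pstar ∈ Set.Icc (0 : ℝ) 1)
    (p : ℝ) (hp : p ∈ Set.Ioo (0 : ℝ) 1) :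
    ∑ k ∈ Finset.range (n + 1),
      (if clopperPearsonUpper n k p < pstar then
          (n.choose k : ℝ) * pstar ^ k * (1 - pstar) ^ (n - k)
        else 0) ≤ p := by
  rw [← sum_filter]
  set S := (range (n + 1)).filter (fun k => clopperPearsonUpper n k p < pstar)
  obtain hS | hS := S.eq_empty_or_nonempty
  · simpa [hS] using hp.1.le
  · calc _ ≤ binomCDF n pstar (S.max' hS) :=
          sum_le_binomCDF_of_forall_le hpstar fun k hk => S.le_max' k hk
      _ ≤ p :=
          (binomCDF_lt_of_clopperPearsonUpper_lt hpstar (mem_filter.mp (S.max'_mem hS)).2).le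

theorem clopper_pearson_coverage
    (n : ℕ) (hn : 0 < n) (pstar : ℝ) (hpstar : pstar ∈ Set.Icc (0 : ℝ) 1)
    (p : ℝ) (hp : p ∈ Set.Ioo (0 : ℝ) 1) :
    ∑ k ∈ Finset.range (n + 1),
      (if clopperPearsonUpper n k p < pstar then
          (n.choose k : ℝ) * pstar ^ k * (1 - pstar) ^ (n - k)
        else 0) ≤ p :=
  clopper_pearson_coverage_general n pstar hpstar p hp
end
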